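/- arXiv:2504.19102 — 6 statements merged into one kernel-verified Lean document; each statement's English description precedes it below -/
import Mathlib

section
/- Let V be a finite-dimensional complex vector space and let S ⊆ V be Zariski dense (i.e., every polynomial function on V vanishing on S vanishes identically). Then for every n ≥ 0, the n-th symmetric power Sⁿ(V) is spanned by the set {a^n : a ∈ S} of n-th powers of elements of S. -/
open MvPolynomial Finset

private lemma key_dual_vanish (d : ℕ) (S : Set (Fin d → ℂ))
    (hS : ∀ p : MvPolynomial (Fin d) ℂ, (∀ a ∈ S, MvPolynomial.eval a p = 0) → p = 0)
    (n : ℕ) (φ : Module.Dual ℂ (MvPolynomial (Fin d) ℂ))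
    (hφ : ∀ a ∈ S, φ ((∑ i : Fin d, MvPolynomial.C (a i) * MvPolynomial.X i) ^ n) = 0)
    (m : Fin d →₀ ℕ) (hm : m.degree = n) :
    φ (MvPolynomial.monomial m 1) = 0 := by
  classical
  -- the auxiliary polynomial
  set p : MvPolynomial (Fin d) ℂ :=
    ∑ k ∈ Finset.piAntidiag Finset.univ n,
      monomial (Finsupp.equivFunOnFinite.symm k)
        ((Nat.multinomial Finset.univ k : ℂ) * φ (∏ i : Fin d, X i ^ k i)) with hp
  have key : ∀ a : Fin d → ℂ, MvPolynomial.eval a p =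
      φ ((∑ i : Fin d, MvPolynomial.C (a i) * MvPolynomial.X i) ^ n) := by
    intro a
    rw [Finset.sum_pow_eq_sum_piAntidiag, map_sum, map_sum]
    refine Finset.sum_congr rfl fun k hk => ?_
    have h1 : ∏ i : Fin d, (C (a i) * X i) ^ k i
        = C (∏ i : Fin d, a i ^ k i) * ∏ i : Fin d, X i ^ k i := by
      rw [map_prod, ← Finset.prod_mul_distrib]
      simp [mul_pow]
    have h2 : (Nat.multinomial Finset.univ k : MvPolynomial (Fin d) ℂ) *
        (C (∏ i : Fin d, a i ^ k i) * ∏ i : Fin d, X i ^ k i)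
        = ((Nat.multinomial Finset.univ k : ℂ) * ∏ i : Fin d, a i ^ k i) •
          (∏ i : Fin d, X i ^ k i) := by
      rw [smul_eq_C_mul, map_mul, map_natCast C]
      ring
    rw [h1, h2, map_smul, eval_monomial, smul_eq_mul]
    have h3 : ((Finsupp.equivFunOnFinite.symm k).prod fun i e => a i ^ e)
        = ∏ i : Fin d, a i ^ k i := by
      rw [Finsupp.prod]
      refine Finset.prod_subset (Finset.subset_univ _) fun i _ hi => ?_
      have : k i = 0 := by
        by_contra h
        exact hi (Finsupp.mem_support_iff.mpr (by simpa using h))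
      simp [this]
    rw [h3]; ring
  have hp0 : p = 0 := by
    refine hS p fun a ha => ?_
    rw [key a, hφ a ha]
  -- extract the coefficient at m
  have hmem : ⇑m ∈ Finset.piAntidiag (Finset.univ : Finset (Fin d)) n := by
    rw [Finset.mem_piAntidiag]
    refine ⟨?_, fun i _ => Finset.mem_univ i⟩
    rw [← hm, Finsupp.degree]
    exact (Finset.sum_subset (Finset.subset_univ _)
      (fun i _ hi => Finsupp.notMem_support_iff.mp hi)).symm
  have hcoeff : MvPolynomial.coeff m p
      = (Nat.multinomial Finset.univ ⇑m : ℂ) * φ (∏ i : Fin d, X i ^ m i) := by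
    rw [hp, MvPolynomial.coeff_sum]
    rw [Finset.sum_eq_single (⇑m)]
    · rw [MvPolynomial.coeff_monomial, Finsupp.equivFunOnFinite_symm_coe, if_pos rfl]
    · intro k hk hne
      rw [MvPolynomial.coeff_monomial, if_neg]
      intro h
      apply hne
      have := congrArg Finsupp.equivFunOnFinite h
      exact (by simpa using this : k = Finsupp.equivFunOnFinite m)
    · intro h
      exact absurd hmem h
  rw [hp0] at hcoeff
  simp only [MvPolynomial.coeff_zero] at hcoeff
  have hmult : (Nat.multinomial Finset.univ ⇑m : ℂ) ≠ 0 := by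
    exact_mod_cast (Nat.multinomial_pos _ _).ne'
  have hφm : φ (∏ i : Fin d, X i ^ m i) = 0 := by
    rcases mul_eq_zero.mp hcoeff.symm with h | h
    · exact absurd h hmult
    · exact h
  have hprod : (∏ i : Fin d, (X i : MvPolynomial (Fin d) ℂ) ^ m i) = monomial m 1 := by
    rw [← MvPolynomial.prod_X_pow_eq_monomial]
    refine (Finset.prod_subset (Finset.subset_univ _) fun i _ hi => ?_).symm
    rw [Finsupp.notMem_support_iff.mp hi, pow_zero]
  rwa [hprod] at hφm

set_option synthInstance.maxHeartbeats 1000000 in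
/-- If `S ⊆ ℂ^d` is Zariski dense, then the n-th symmetric power
`Sⁿ(ℂ^d)` (realized as homogeneous polynomials of degree n) is spanned by
the n-th powers of elements of `S` (realized as linear forms). -/
theorem symmetric_power_spanned_by_powers_of_dense_set
    (d : ℕ) (S : Set (Fin d → ℂ))
    (hS : ∀ p : MvPolynomial (Fin d) ℂ, (∀ a ∈ S, MvPolynomial.eval a p = 0) → p = 0)
    (n : ℕ) :
    Submodule.span ℂ
        {q : MvPolynomial (Fin d) ℂ |
          ∃ a ∈ S, q = (∑ i : Fin d, MvPolynomial.C (a i) * MvPolynomial.X i) ^ n}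
      = MvPolynomial.homogeneousSubmodule (Fin d) ℂ n := by
  classical
  set W := Submodule.span ℂ
      {q : MvPolynomial (Fin d) ℂ |
        ∃ a ∈ S, q = (∑ i : Fin d, MvPolynomial.C (a i) * MvPolynomial.X i) ^ n} with hW
  apply le_antisymm
  · rw [hW, Submodule.span_le]
    rintro q ⟨a, _, rfl⟩
    rw [SetLike.mem_coe, mem_homogeneousSubmodule]
    have h1 : (∑ i : Fin d, MvPolynomial.C (a i) * MvPolynomial.X i).IsHomogeneous 1 :=
      IsHomogeneous.sum _ _ _ fun i _ => (isHomogeneous_X _ _).C_mul _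
    simpa using h1.pow n
  · -- every monomial of degree n is in W
    have hmono : ∀ m : Fin d →₀ ℕ, m.degree = n → (monomial m (1 : ℂ)) ∈ W := by
      intro m hm
      rw [← Submodule.Quotient.mk_eq_zero W,
        ← Module.forall_dual_apply_eq_zero_iff (R := ℂ)]
      intro ψ
      have := key_dual_vanish d S hS n (ψ.comp W.mkQ) (fun a ha => ?_) m hm
      · simpa using this
      · have hmem : (∑ i : Fin d, MvPolynomial.C (a i) * MvPolynomial.X i) ^ n ∈ W :=
          Submodule.subset_span ⟨a, ha, rfl⟩
        simp [(Submodule.Quotient.mk_eq_zero W).mpr hmem]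
    intro q hq
    rw [mem_homogeneousSubmodule] at hq
    rw [← q.support_sum_monomial_coeff]
    refine Submodule.sum_mem _ fun m hm => ?_
    have h4 : monomial m (MvPolynomial.coeff m q) =
        (MvPolynomial.coeff m q) • monomial m (1 : ℂ) := by
      rw [smul_monomial, smul_eq_mul, mul_one]
    rw [h4]
    refine Submodule.smul_mem _ _ (hmono m ?_)
    have := hq (MvPolynomial.mem_support_iff.mp hm)
    exact (by simpa [Finsupp.degree, Finsupp.weight, Finsupp.linearCombination, Finsupp.sum] using this : ∑ a ∈ m.support, m a = n)
end

section
/- Define sequences of polynomials α_n(x), β_n(x) ∈ ℚ[x] by α_0 = 1, β_{-1} = 0 and the joint recursion: if α_{n-1}(x) = a_0 + a_1 x + ⋯ + a_{n-1}x^{n-1}, then α_n(x) = x·α_{n-1}(x) − Σ_{i=1}^{n-1} a_i β_{i-1}(x) and β_{n-1}(x) = x·β_{n-2}(x) + Σ_{i=0}^{n-1} a_i α_i(x). Then for all n ≥ 1, α_n has degree n with positive leading coefficient, and β_{n-1} has degree n−1 with positive leading coefficient. -/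
open Polynomial

private lemma top_coeff_aux {p : Polynomial ℚ} {n : ℕ}
    (h1 : ∀ k, n < k → p.coeff k = 0) (h2 : 0 < p.coeff n) :
    p.natDegree = n ∧ 0 < p.leadingCoeff := by
  have hle : p.natDegree ≤ n := Polynomial.natDegree_le_iff_coeff_eq_zero.mpr h1
  have hge : n ≤ p.natDegree := le_natDegree_of_ne_zero h2.ne'
  have hdeg : p.natDegree = n := le_antisymm hle hge
  refine ⟨hdeg, ?_⟩
  rw [Polynomial.leadingCoeff, hdeg]
  exact h2

/-- The polynomials `α_n` and `β_{n-1}` (here `B n = β_{n-1}`, so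
`B 0 = β_{-1} = 0`) defined by the joint recursion have degrees `n` and `n-1`
respectively, with positive leading coefficients, for all `n ≥ 1`. -/
theorem alpha_beta_degree_leadingCoeff
    (α B : ℕ → Polynomial ℚ)
    (hα0 : α 0 = 1) (hB0 : B 0 = 0)
    (hαrec : ∀ n : ℕ, 1 ≤ n →
      α n = X * α (n - 1)
        - ∑ i ∈ Finset.Icc 1 (n - 1), Polynomial.C ((α (n - 1)).coeff i) * B i)
    (hBrec : ∀ n : ℕ, 1 ≤ n →
      B n = X * B (n - 1)
        + ∑ i ∈ Finset.range n, Polynomial.C ((α (n - 1)).coeff i) * α i) :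
    ∀ n : ℕ, 1 ≤ n →
      (α n).natDegree = n ∧ 0 < (α n).leadingCoeff ∧
      (B n).natDegree = n - 1 ∧ 0 < (B n).leadingCoeff := by
  intro n
  induction n using Nat.strong_induction_on with
  | _ n IH =>
    intro hn
    -- facts about α at any index m ≤ n - 1 (including m = 0)
    have hαfact : ∀ m : ℕ, m < n → (α m).natDegree = m ∧ 0 < (α m).leadingCoeff := by
      intro m hm
      rcases Nat.eq_zero_or_pos m with rfl | hm1
      · rw [hα0]
        exact ⟨natDegree_one, by rw [leadingCoeff_one]; norm_num⟩
      · exact ⟨(IH m hm hm1).1, (IH m hm hm1).2.1⟩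
    have hprev := hαfact (n - 1) (by omega)
    -- key coefficient fact : coeff k (α (n-1)) = 0 for k > n - 1, and coeff (n-1) > 0
    have hprevz : ∀ k, n - 1 < k → (α (n - 1)).coeff k = 0 := fun k hk =>
      coeff_eq_zero_of_natDegree_lt (by rw [hprev.1]; exact hk)
    have hprevpos : 0 < (α (n - 1)).coeff (n - 1) := by
      have := hprev.2
      rwa [Polynomial.leadingCoeff, hprev.1] at this
    -- ==== α n ====
    have hαn : ∀ k, n < k → (α n).coeff k = 0 := by
      intro k hk
      rw [hαrec n hn, coeff_sub, finset_sum_coeff]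
      have h1 : (X * α (n - 1)).coeff k = 0 := by
        obtain ⟨j, rfl⟩ : ∃ j, k = j + 1 := ⟨k - 1, by omega⟩
        rw [coeff_X_mul]
        exact hprevz j (by omega)
      have h2 : ∀ i ∈ Finset.Icc 1 (n - 1),
          (Polynomial.C ((α (n - 1)).coeff i) * B i).coeff k = 0 := by
        intro i hi
        simp only [Finset.mem_Icc] at hi
        rw [coeff_C_mul]
        have hBi := (IH i (by omega) hi.1).2.2.1
        have : (B i).coeff k = 0 :=
          coeff_eq_zero_of_natDegree_lt (by rw [hBi]; omega)
        rw [this, mul_zero]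
      rw [h1, Finset.sum_eq_zero h2, sub_zero]
    have hαtop : 0 < (α n).coeff n := by
      rw [hαrec n hn, coeff_sub, finset_sum_coeff]
      have h1 : (X * α (n - 1)).coeff n = (α (n - 1)).coeff (n - 1) := by
        obtain ⟨j, hj⟩ : ∃ j, n = j + 1 := ⟨n - 1, by omega⟩
        rw [hj, coeff_X_mul]; rfl
      have h2 : ∀ i ∈ Finset.Icc 1 (n - 1),
          (Polynomial.C ((α (n - 1)).coeff i) * B i).coeff n = 0 := by
        intro i hi
        simp only [Finset.mem_Icc] at hi
        rw [coeff_C_mul]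
        have hBi := (IH i (by omega) hi.1).2.2.1
        have : (B i).coeff n = 0 :=
          coeff_eq_zero_of_natDegree_lt (by rw [hBi]; omega)
        rw [this, mul_zero]
      rw [h1, Finset.sum_eq_zero h2, sub_zero]
      exact hprevpos
    obtain ⟨hαdeg, hαlc⟩ := top_coeff_aux hαn hαtop
    -- ==== B n ====
    have hBz : ∀ k, n - 1 < k → (B n).coeff k = 0 := by
      intro k hk
      rw [hBrec n hn, coeff_add, finset_sum_coeff]
      have h1 : (X * B (n - 1)).coeff k = 0 := by
        obtain ⟨j, rfl⟩ : ∃ j, k = j + 1 := ⟨k - 1, by omega⟩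
        rw [coeff_X_mul]
        rcases Nat.eq_zero_or_pos (n - 1) with h | h
        · rw [h, hB0, coeff_zero]
        · have := (IH (n - 1) (by omega) h).2.2.1
          exact coeff_eq_zero_of_natDegree_lt (by rw [this]; omega)
      have h2 : ∀ i ∈ Finset.range n,
          (Polynomial.C ((α (n - 1)).coeff i) * α i).coeff k = 0 := by
        intro i hi
        simp only [Finset.mem_range] at hi
        rw [coeff_C_mul]
        have := (hαfact i hi).1
        have : (α i).coeff k = 0 :=
          coeff_eq_zero_of_natDegree_lt (by rw [this]; omega)
        rw [this, mul_zero]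
      rw [h1, Finset.sum_eq_zero h2, add_zero]
    have hBtop : 0 < (B n).coeff (n - 1) := by
      rw [hBrec n hn, coeff_add, finset_sum_coeff]
      obtain ⟨m, rfl⟩ : ∃ m, n = m + 1 := ⟨n - 1, by omega⟩
      simp only [Nat.add_sub_cancel]
      have hsum : ∑ i ∈ Finset.range (m + 1),
          (Polynomial.C ((α m).coeff i) * α i).coeff m
          = (α m).coeff m * (α m).coeff m := by
        rw [Finset.sum_range_succ]
        have h0 : ∀ i ∈ Finset.range m,
            (Polynomial.C ((α m).coeff i) * α i).coeff m = 0 := by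
          intro i hi
          simp only [Finset.mem_range] at hi
          rw [coeff_C_mul]
          have hdi := (hαfact i (by omega)).1
          have : (α i).coeff m = 0 :=
            coeff_eq_zero_of_natDegree_lt (by rw [hdi]; omega)
          rw [this, mul_zero]
        rw [Finset.sum_eq_zero h0, zero_add, coeff_C_mul]
      rw [hsum]
      have hsq : 0 < (α m).coeff m * (α m).coeff m := by
        have : 0 < (α m).coeff m := by
          have := hprevpos; simpa using this
        positivity
      have hX : 0 ≤ (X * B m).coeff m := by
        rcases Nat.eq_zero_or_pos m with rfl | hm
        · rw [hB0, mul_zero, coeff_zero]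
        · obtain ⟨j, rfl⟩ : ∃ j, m = j + 1 := ⟨m - 1, by omega⟩
          rw [coeff_X_mul]
          have hBm := IH (j + 1) (by omega) (by omega)
          have hd := hBm.2.2.1
          have hl := hBm.2.2.2
          rw [Polynomial.leadingCoeff, hd] at hl
          simp only [Nat.add_sub_cancel] at hl
          exact hl.le
      linarith
    obtain ⟨hBdeg, hBlc⟩ := top_coeff_aux hBz hBtop
    exact ⟨hαdeg, hαlc, hBdeg, hBlc⟩
end

section
/- Let A be an associative (not necessarily commutative) ℂ-algebra containing elements p, u, w satisfying p·u = u·p + w and p·w = w·p + u. Then for every n ≥ 0, p^n u = Σ_{i even, 0≤i≤n} C(n,i) u p^{n−i} + Σ_{i odd, 0≤i≤n} C(n,i) w p^{n−i}, where C(n,i) is the binomial coefficient. -/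
/-- In an associative ℂ-algebra with `p u = u p + w` and
`p w = w p + u`, we have
`p^n u = Σ_{i even} C(n,i) u p^{n-i} + Σ_{i odd} C(n,i) w p^{n-i}`. -/
theorem pow_mul_expansion {A : Type*} [Ring A] [Algebra ℂ A]
    (p u w : A) (h1 : p * u = u * p + w) (h2 : p * w = w * p + u) (n : ℕ) :
    p ^ n * u =
      (∑ i ∈ (Finset.range (n + 1)).filter (fun i => Even i),
          (n.choose i : ℂ) • (u * p ^ (n - i)))
      + (∑ i ∈ (Finset.range (n + 1)).filter (fun i => Odd i),
          (n.choose i : ℂ) • (w * p ^ (n - i))) := by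
  have hA : ∀ m : ℕ, p ^ m * (u + w) = (u + w) * (1 + p) ^ m := by
    intro m
    induction m with
    | zero => simp
    | succ m ih =>
      have hstep : p * (u + w) = (u + w) * (1 + p) := by
        rw [mul_add, h1, h2]; noncomm_ring
      calc p ^ (m+1) * (u + w) = p ^ m * (p * (u + w)) := by
            rw [pow_succ, mul_assoc]
        _ = p ^ m * ((u + w) * (1 + p)) := by rw [hstep]
        _ = (p ^ m * (u + w)) * (1 + p) := by rw [mul_assoc]
        _ = (u + w) * (1 + p) ^ (m+1) := by rw [ih, mul_assoc, ← pow_succ]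
  have hB : ∀ m : ℕ, p ^ m * (u - w) = (u - w) * (p - 1) ^ m := by
    intro m
    induction m with
    | zero => simp
    | succ m ih =>
      have hstep : p * (u - w) = (u - w) * (p - 1) := by
        rw [mul_sub, h1, h2]; noncomm_ring
      calc p ^ (m+1) * (u - w) = p ^ m * (p * (u - w)) := by
            rw [pow_succ, mul_assoc]
        _ = p ^ m * ((u - w) * (p - 1)) := by rw [hstep]
        _ = (p ^ m * (u - w)) * (p - 1) := by rw [mul_assoc]
        _ = (u - w) * (p - 1) ^ (m+1) := by rw [ih, mul_assoc, ← pow_succ]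
  have hb1 : (1 + p) ^ n = ∑ m ∈ Finset.range (n+1),
      p ^ (n - m) * (n.choose m : A) := by
    rw [(Commute.one_left p).add_pow]
    simp [one_pow, one_mul]
  have hb2 : (p - 1) ^ n = ∑ m ∈ Finset.range (n+1),
      (-1 : A) ^ m * p ^ (n - m) * (n.choose m : A) := by
    rw [show (p - 1 : A) = -1 + p by rw [sub_eq_neg_add], (Commute.neg_one_left p).add_pow]
  have he : (1 + p) ^ n + (p - 1) ^ n
      = 2 • ∑ i ∈ (Finset.range (n + 1)).filter (fun i => Even i),
          (n.choose i) • p ^ (n - i) := by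
    rw [hb1, hb2, ← Finset.sum_add_distrib, Finset.smul_sum,
      ← Finset.sum_filter_add_sum_filter_not (Finset.range (n+1)) (fun i => Even i)]
    have hzero : ∑ m ∈ (Finset.range (n+1)).filter (fun i => ¬ Even i),
        (p ^ (n - m) * (n.choose m : A) + (-1:A) ^ m * p ^ (n - m) * (n.choose m : A)) = 0 := by
      apply Finset.sum_eq_zero
      intro m hm
      simp only [Finset.mem_filter] at hm
      rw [(Nat.not_even_iff_odd.mp hm.2).neg_one_pow]
      noncomm_ring
    rw [hzero, add_zero]
    apply Finset.sum_congr rfl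
    intro m hm
    simp only [Finset.mem_filter] at hm
    rw [hm.2.neg_one_pow]
    simp only [nsmul_eq_mul]
    rw [(Nat.cast_commute (n.choose m) (p ^ (n - m))).eq]
    push_cast
    noncomm_ring
  have ho : (1 + p) ^ n - (p - 1) ^ n
      = 2 • ∑ i ∈ (Finset.range (n + 1)).filter (fun i => Odd i),
          (n.choose i) • p ^ (n - i) := by
    rw [hb1, hb2, ← Finset.sum_sub_distrib, Finset.smul_sum,
      ← Finset.sum_filter_add_sum_filter_not (Finset.range (n+1)) (fun i => Odd i)]
    have hzero : ∑ m ∈ (Finset.range (n+1)).filter (fun i => ¬ Odd i),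
        (p ^ (n - m) * (n.choose m : A) - (-1:A) ^ m * p ^ (n - m) * (n.choose m : A)) = 0 := by
      apply Finset.sum_eq_zero
      intro m hm
      simp only [Finset.mem_filter] at hm
      rw [(Nat.not_odd_iff_even.mp hm.2).neg_one_pow]
      noncomm_ring
    rw [hzero, add_zero]
    apply Finset.sum_congr rfl
    intro m hm
    simp only [Finset.mem_filter] at hm
    rw [hm.2.neg_one_pow]
    simp only [nsmul_eq_mul]
    rw [(Nat.cast_commute (n.choose m) (p ^ (n - m))).eq]
    push_cast
    noncomm_ring
  -- rewrite RHS sums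
  have hE : (∑ i ∈ (Finset.range (n + 1)).filter (fun i => Even i),
          (n.choose i : ℂ) • (u * p ^ (n - i)))
      = u * ∑ i ∈ (Finset.range (n + 1)).filter (fun i => Even i),
          (n.choose i) • p ^ (n - i) := by
    rw [Finset.mul_sum]
    apply Finset.sum_congr rfl
    intro m _
    rw [Nat.cast_smul_eq_nsmul, mul_smul_comm]
  have hO : (∑ i ∈ (Finset.range (n + 1)).filter (fun i => Odd i),
          (n.choose i : ℂ) • (w * p ^ (n - i)))
      = w * ∑ i ∈ (Finset.range (n + 1)).filter (fun i => Odd i),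
          (n.choose i) • p ^ (n - i) := by
    rw [Finset.mul_sum]
    apply Finset.sum_congr rfl
    intro m _
    rw [Nat.cast_smul_eq_nsmul, mul_smul_comm]
  rw [hE, hO]
  have hfin : (2:ℂ) • (p ^ n * u) = p ^ n * (u + w) + p ^ n * (u - w) := by
    rw [show ((2:ℂ)) = ((2:ℕ):ℂ) by norm_num, Nat.cast_smul_eq_nsmul]
    rw [two_nsmul]
    noncomm_ring
  have main : (2:ℂ) • (p ^ n * u) = (2:ℂ) •
      (u * ∑ i ∈ (Finset.range (n + 1)).filter (fun i => Even i),
          (n.choose i) • p ^ (n - i)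
       + w * ∑ i ∈ (Finset.range (n + 1)).filter (fun i => Odd i),
          (n.choose i) • p ^ (n - i)) := by
    rw [hfin, hA, hB, smul_add]
    rw [show ((2:ℂ)) = ((2:ℕ):ℂ) by norm_num, Nat.cast_smul_eq_nsmul,
      Nat.cast_smul_eq_nsmul]
    rw [← mul_smul_comm, ← mul_smul_comm, ← he, ← ho]
    noncomm_ring
  calc p ^ n * u = (2:ℂ)⁻¹ • ((2:ℂ) • (p ^ n * u)) :=
        (inv_smul_smul₀ two_ne_zero _).symm
    _ = _ := by rw [main, inv_smul_smul₀ two_ne_zero]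
end

section
/- Define polynomials α_n(x) ∈ ℚ[x] by α_0 = 1 and the recursion α_n(x) = Σ_{0≤i≤n, i even} C(n,i) x^{n−i} − Σ_{i,j odd, i,j≥1, i+j≤n} C(n,i)·C(n−i,j)·α_{n−i−j}(x). Then α_n(x) = Σ_{k=0}^{⌊n/2⌋} E_{2k} C(n,2k) x^{n−2k}, where E_{2k} are the Euler zigzag numbers defined by sech(x) = Σ_{k≥0} E_{2k} x^{2k}/(2k)!. -/
open Polynomial

/-- The formal power series of `cosh` over ℚ. -/
noncomputable def coshQ : PowerSeries ℚ :=
  PowerSeries.mk fun n => if Even n then (1 : ℚ) / n.factorial else 0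

/-- The formal power series of `sech = 1/cosh` over ℚ. -/
noncomputable def sechQ : PowerSeries ℚ := coshQ⁻¹

/-- The Euler zigzag (secant) numbers: `sech x = Σ E_{2k} x^{2k}/(2k)!`. -/
noncomputable def eulerZigzag (k : ℕ) : ℚ :=
  ((2 * k).factorial : ℚ) * PowerSeries.coeff (2 * k) sechQ

noncomputable def sinhQ : PowerSeries ℚ :=
  PowerSeries.mk fun n => if Odd n then (1 : ℚ) / n.factorial else 0

noncomputable def EZ (m : ℕ) : ℚ := (m.factorial : ℚ) * PowerSeries.coeff m sechQ

lemma eulerZigzag_eq (k : ℕ) : eulerZigzag k = EZ (2 * k) := rfl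

lemma constantCoeff_coshQ : PowerSeries.constantCoeff coshQ = 1 := by
  simp [coshQ, ← PowerSeries.coeff_zero_eq_constantCoeff]

lemma cosh_mul_sech : coshQ * sechQ = 1 := by
  apply PowerSeries.mul_inv_cancel
  rw [constantCoeff_coshQ]; norm_num

lemma cosh_sq_sub_sinh_sq : coshQ * coshQ - sinhQ * sinhQ = 1 := by
  ext m
  rw [map_sub, PowerSeries.coeff_mul, PowerSeries.coeff_mul, ← Finset.sum_sub_distrib,
    Finset.Nat.sum_antidiagonal_eq_sum_range_succ_mk]
  simp only [coshQ, sinhQ, PowerSeries.coeff_mk]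
  have key : ∀ i ∈ Finset.range (m + 1),
      ((if Even i then (1:ℚ)/i.factorial else 0) * (if Even (m - i) then (1:ℚ)/(m-i).factorial else 0)
      - (if Odd i then (1:ℚ)/i.factorial else 0) * (if Odd (m - i) then (1:ℚ)/(m-i).factorial else 0))
      = (if Even m then ((-1:ℚ))^i * ((m.choose i : ℚ) / m.factorial) else 0) := by
    intro i hi
    rw [Finset.mem_range] at hi
    have him : i ≤ m := by omega
    have hsub : (m.choose i : ℚ) / m.factorial = 1 / (i.factorial * (m - i).factorial) := by
      rw [Nat.cast_choose ℚ him]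
      field_simp
    have hmi := Nat.even_sub him
    by_cases hm : Even m <;> by_cases hii : Even i
    · have h2 : Even (m - i) := hmi.mpr (iff_of_true hm hii)
      rw [if_pos hii, if_pos h2, if_neg (Nat.not_odd_iff_even.mpr hii), if_pos hm, zero_mul,
        sub_zero, hii.neg_one_pow, one_mul, hsub]
      ring
    · have h2 : ¬ Even (m - i) := fun h => hii ((hmi.mp h).mp hm)
      rw [if_neg hii, if_pos (Nat.not_even_iff_odd.mp hii), if_pos (Nat.not_even_iff_odd.mp h2),
        if_pos hm, Odd.neg_one_pow (Nat.not_even_iff_odd.mp hii), hsub]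
      ring
    · have h2 : ¬ Even (m - i) := fun h => hm ((hmi.mp h).mpr hii)
      rw [if_pos hii, if_neg h2, if_neg (Nat.not_odd_iff_even.mpr hii), if_neg hm]
      ring
    · have h2 : Even (m - i) := hmi.mpr (iff_of_false hm hii)
      rw [if_neg hii, if_pos (Nat.not_even_iff_odd.mp hii), if_neg (Nat.not_odd_iff_even.mpr h2),
        if_neg hm]
      ring
  rw [Finset.sum_congr rfl key]
  by_cases hm : Even m
  · simp only [if_pos hm]
    simp only [← mul_div_assoc]
    rw [← Finset.sum_div]
    have hQ : (∑ i ∈ Finset.range (m + 1), (-1:ℚ) ^ i * (m.choose i : ℚ)) = if m = 0 then 1 else 0 := by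
      exact_mod_cast congrArg (fun z : ℤ => (z : ℚ)) (@Int.alternating_sum_range_choose m)
    rw [hQ]
    rcases Nat.eq_zero_or_pos m with h | h
    · subst h; simp
    · rw [if_neg (by omega)]
      simp only [PowerSeries.coeff_one, if_neg (by omega : ¬ m = 0), zero_div]
  · simp only [if_neg hm, Finset.sum_const_zero]
    have : m ≠ 0 := by rintro rfl; exact hm (by simp)
    simp [PowerSeries.coeff_one, this]

lemma sinh_sq_sech : sinhQ * sinhQ * sechQ = coshQ - sechQ := by
  linear_combination (-sechQ) * cosh_sq_sub_sinh_sq + coshQ * cosh_mul_sech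

lemma sum_tri (m : ℕ) (g : ℕ → ℕ → ℚ) :
    ∑ a ∈ Finset.range (m + 1), ∑ i ∈ Finset.range (a + 1), g i (a - i)
    = ∑ i ∈ Finset.range (m + 1), ∑ j ∈ Finset.range (m + 1),
        if i + j ≤ m then g i j else 0 := by
  have hrhs : (∑ i ∈ Finset.range (m + 1), ∑ j ∈ Finset.range (m + 1),
      if i + j ≤ m then g i j else 0)
      = ∑ p ∈ (Finset.range (m+1) ×ˢ Finset.range (m+1)).filter (fun p => p.1 + p.2 ≤ m),
          g p.1 p.2 := by
    rw [Finset.sum_filter, ← Finset.sum_product']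
  rw [hrhs, Finset.sum_sigma']
  apply Finset.sum_nbij' (i := fun p => (p.2, p.1 - p.2)) (j := fun p => ⟨p.1 + p.2, p.1⟩)
  · rintro ⟨a, i⟩ h
    simp only [Finset.mem_sigma, Finset.mem_range] at h
    simp only [Finset.mem_filter, Finset.mem_product, Finset.mem_range]
    omega
  · rintro ⟨i, j⟩ h
    simp only [Finset.mem_filter, Finset.mem_product, Finset.mem_range] at h
    simp only [Finset.mem_sigma, Finset.mem_range]
    omega
  · rintro ⟨a, i⟩ h
    simp only [Finset.mem_sigma, Finset.mem_range] at h
    simp only [Sigma.mk.inj_iff]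
    constructor
    · omega
    · exact heq_of_eq rfl
  · rintro ⟨i, j⟩ h
    simp only [Finset.mem_filter, Finset.mem_product, Finset.mem_range] at h
    simp only [Prod.mk.injEq]
    refine ⟨trivial, by omega⟩
  · rintro ⟨a, i⟩ h
    rfl

lemma coeff_sinh_sq (a : ℕ) : PowerSeries.coeff a (sinhQ * sinhQ) =
    ∑ i ∈ Finset.range (a + 1),
      (if Odd i then (1:ℚ)/i.factorial else 0) * (if Odd (a-i) then (1:ℚ)/(a-i).factorial else 0) := by
  rw [PowerSeries.coeff_mul, Finset.Nat.sum_antidiagonal_eq_sum_range_succ_mk]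
  simp [sinhQ]

lemma key_base (m : ℕ) :
    (∑ i ∈ Finset.range (m + 1), ∑ j ∈ Finset.range (m + 1),
      if Odd i ∧ Odd j ∧ i + j ≤ m then
        (m.choose i : ℚ) * ((m - i).choose j : ℚ) * EZ (m - i - j) else 0)
    = (if Even m then 1 else 0) - EZ m := by
  have hc := congrArg (PowerSeries.coeff m) sinh_sq_sech
  rw [map_sub, PowerSeries.coeff_mul, Finset.Nat.sum_antidiagonal_eq_sum_range_succ_mk] at hc
  set s : ℕ → ℚ := fun i => if Odd i then (1:ℚ)/i.factorial else 0 with hs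
  have step1 : (∑ i ∈ Finset.range (m + 1), ∑ j ∈ Finset.range (m + 1),
      if Odd i ∧ Odd j ∧ i + j ≤ m then
        (m.choose i : ℚ) * ((m - i).choose j : ℚ) * EZ (m - i - j) else 0)
      = ∑ i ∈ Finset.range (m + 1), ∑ j ∈ Finset.range (m + 1),
        if i + j ≤ m then
          (m.factorial : ℚ) * (s i * s j * PowerSeries.coeff (m - (i + j)) sechQ) else 0 := by
    apply Finset.sum_congr rfl; intro i _
    apply Finset.sum_congr rfl; intro j _
    by_cases hij : i + j ≤ m
    · rw [if_pos hij]
      by_cases h1 : Odd i ∧ Odd j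
      · rw [if_pos ⟨h1.1, h1.2, hij⟩]
        rw [hs]; simp only []
        rw [if_pos h1.1, if_pos h1.2]
        have him : i ≤ m := by omega
        have hjm : j ≤ m - i := by omega
        have hmm : m - (i + j) = m - i - j := by omega
        rw [hmm, EZ, Nat.cast_choose ℚ him, Nat.cast_choose ℚ hjm]
        have f1 : (i.factorial : ℚ) ≠ 0 := by positivity
        have f2 : (j.factorial : ℚ) ≠ 0 := by positivity
        have f3 : ((m - i).factorial : ℚ) ≠ 0 := by positivity
        have f4 : ((m - i - j).factorial : ℚ) ≠ 0 := by positivity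
        field_simp
      · rw [if_neg (fun hh => h1 ⟨hh.1, hh.2.1⟩), hs]; simp only []
        rcases Decidable.not_and_iff_or_not.mp h1 with h | h
        · rw [if_neg h]; ring
        · rw [if_neg h]; ring
    · rw [if_neg (fun hh => hij hh.2.2), if_neg hij]
  rw [step1, ← sum_tri m (fun i j => (m.factorial : ℚ) *
      (s i * s j * PowerSeries.coeff (m - (i + j)) sechQ))]
  have step2 : ∀ a ∈ Finset.range (m + 1), (∑ i ∈ Finset.range (a + 1),
      (m.factorial : ℚ) * (s i * s (a - i) * PowerSeries.coeff (m - (i + (a - i))) sechQ))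
      = (m.factorial : ℚ) * (PowerSeries.coeff a (sinhQ * sinhQ) * PowerSeries.coeff (m - a) sechQ) := by
    intro a _
    rw [coeff_sinh_sq, Finset.sum_mul, Finset.mul_sum]
    apply Finset.sum_congr rfl; intro i hi
    rw [Finset.mem_range] at hi
    have : i + (a - i) = a := by omega
    rw [this]
  rw [Finset.sum_congr rfl step2, ← Finset.mul_sum, hc, mul_sub]
  have hcosh : (m.factorial : ℚ) * PowerSeries.coeff m coshQ = if Even m then 1 else 0 := by
    simp only [coshQ, PowerSeries.coeff_mk, mul_ite, mul_zero]
    have : (m.factorial : ℚ) * (1 / m.factorial) = 1 := by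
      field_simp
    rw [this]
  rw [hcosh, EZ]

lemma key_id (m N : ℕ) (h : m ≤ N) :
    (∑ i ∈ Finset.range (N + 1), ∑ j ∈ Finset.range (N + 1),
      if Odd i ∧ Odd j ∧ i + j ≤ m then
        (m.choose i : ℚ) * ((m - i).choose j : ℚ) * EZ (m - i - j) else 0)
    = (if Even m then 1 else 0) - EZ m := by
  have sub : Finset.range (m + 1) ⊆ Finset.range (N + 1) := by
    apply Finset.range_subset_range.mpr; omega
  have h1 : ∀ i : ℕ, (∑ j ∈ Finset.range (N + 1),
      if Odd i ∧ Odd j ∧ i + j ≤ m then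
        (m.choose i : ℚ) * ((m - i).choose j : ℚ) * EZ (m - i - j) else 0)
      = ∑ j ∈ Finset.range (m + 1),
      if Odd i ∧ Odd j ∧ i + j ≤ m then
        (m.choose i : ℚ) * ((m - i).choose j : ℚ) * EZ (m - i - j) else 0 := by
    intro i
    refine (Finset.sum_subset sub (fun j _ hj => if_neg fun hh => absurd hh.2.2 ?_)).symm
    simp only [Finset.mem_range, not_lt] at hj; omega
  rw [Finset.sum_congr rfl (fun i _ => h1 i),
    ← Finset.sum_subset sub (fun i _ hi => Finset.sum_eq_zero fun j _ =>
      if_neg fun hh => absurd hh.2.2 (by simp only [Finset.mem_range, not_lt] at hi; omega))]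
  exact key_base m

lemma EZ_zero : EZ 0 = 1 := by
  rw [EZ]
  rw [PowerSeries.coeff_zero_eq_constantCoeff]
  rw [sechQ, PowerSeries.constantCoeff_inv, constantCoeff_coshQ]
  norm_num

lemma multinom {n m i j : ℕ} (hmn : m ≤ n) (hij : i + j ≤ m) :
    (n.choose i : ℚ) * ((n - i).choose j : ℚ) * ((n - i - j).choose (m - i - j) : ℚ)
    = (n.choose m : ℚ) * ((m.choose i : ℚ) * ((m - i).choose j : ℚ)) := by
  have h1 : i ≤ n := by omega
  have h2 : j ≤ n - i := by omega
  have h3 : m - i - j ≤ n - i - j := by omega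
  have h4 : i ≤ m := by omega
  have h5 : j ≤ m - i := by omega
  have e1 : n - i - j - (m - i - j) = n - m := by omega
  have e2 : m - i - (m - i - j) = j := by omega
  rw [Nat.cast_choose ℚ h1, Nat.cast_choose ℚ h2, Nat.cast_choose ℚ h3,
    Nat.cast_choose ℚ hmn, Nat.cast_choose ℚ h4, Nat.cast_choose ℚ h5, e1]
  have f : ∀ a : ℕ, ((a.factorial : ℚ)) ≠ 0 := fun a => by positivity
  field_simp

lemma collapse2 (t d : ℕ) (g : ℕ → ℚ) :
    (∑ k ∈ Finset.range (t / 2 + 1), if d = t - 2 * k then g k else 0)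
    = if d ≤ t ∧ Even (t - d) then g ((t - d) / 2) else 0 := by
  by_cases h : d ≤ t ∧ Even (t - d)
  · obtain ⟨c, hc⟩ := h.2
    rw [if_pos h]
    rw [Finset.sum_eq_single ((t - d) / 2)]
    · rw [if_pos (by omega)]
    · intro k hk hne
      rw [Finset.mem_range] at hk
      exact if_neg (by omega)
    · intro hk
      rw [Finset.mem_range] at hk
      omega
  · rw [if_neg h]
    apply Finset.sum_eq_zero
    intro k hk
    rw [Finset.mem_range] at hk
    apply if_neg
    intro hkd
    apply h
    rw [Nat.even_sub (by omega), Nat.even_iff, Nat.even_iff]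
    omega


/-- The polynomials `α_n` defined by `α_0 = 1` and the recursion
`α_n = Σ_{i even} C(n,i) x^{n−i} − Σ_{i,j odd} C(n,i) C(n−i,j) α_{n−i−j}`
are given by `α_n(x) = Σ_k E_{2k} C(n,2k) x^{n−2k}`. -/
theorem alpha_eq_zigzag_polynomial (α : ℕ → Polynomial ℚ) (h0 : α 0 = 1)
    (hrec : ∀ n : ℕ, 1 ≤ n →
      α n = (∑ i ∈ (Finset.range (n + 1)).filter (fun i => Even i),
              (n.choose i : ℚ) • (X : Polynomial ℚ) ^ (n - i))
        - ∑ i ∈ Finset.range (n + 1), ∑ j ∈ Finset.range (n + 1),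
            if Odd i ∧ Odd j ∧ i + j ≤ n then
              ((n.choose i : ℚ) * ((n - i).choose j : ℚ)) • α (n - i - j)
            else 0) :
    ∀ n : ℕ, α n = ∑ k ∈ Finset.range (n / 2 + 1),
      (eulerZigzag k * (n.choose (2 * k) : ℚ)) • (X : Polynomial ℚ) ^ (n - 2 * k) := by
  intro n
  induction n using Nat.strong_induction_on with
  | _ n ih =>
  rcases Nat.eq_zero_or_pos n with rfl | hn
  · rw [h0]
    simp [eulerZigzag_eq, EZ_zero]
  · rw [hrec n hn]
    have hsub : (∑ i ∈ Finset.range (n + 1), ∑ j ∈ Finset.range (n + 1),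
        if Odd i ∧ Odd j ∧ i + j ≤ n then
          ((n.choose i : ℚ) * ((n - i).choose j : ℚ)) • α (n - i - j) else 0)
      = ∑ i ∈ Finset.range (n + 1), ∑ j ∈ Finset.range (n + 1),
        if Odd i ∧ Odd j ∧ i + j ≤ n then
          ((n.choose i : ℚ) * ((n - i).choose j : ℚ)) •
            (∑ k ∈ Finset.range ((n - i - j) / 2 + 1),
              (eulerZigzag k * ((n - i - j).choose (2 * k) : ℚ)) •
                (X : Polynomial ℚ) ^ (n - i - j - 2 * k)) else 0 := by
      apply Finset.sum_congr rfl; intro i _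
      apply Finset.sum_congr rfl; intro j _
      by_cases hcond : Odd i ∧ Odd j ∧ i + j ≤ n
      · have hipos : 1 ≤ i := by obtain ⟨c, hc⟩ := hcond.1; omega
        rw [if_pos hcond, if_pos hcond, ih (n - i - j) (by omega)]
      · rw [if_neg hcond, if_neg hcond]
    rw [hsub]
    ext d
    simp only [Polynomial.coeff_sub, Polynomial.finset_sum_coeff, Polynomial.coeff_smul,
      Polynomial.coeff_X_pow, smul_eq_mul, apply_ite (fun p : Polynomial ℚ => p.coeff d),
      Polynomial.coeff_zero, mul_ite, mul_one, mul_zero]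
    -- now a pure ℚ identity
    by_cases hdn : d ≤ n
    · -- collapse the inner k-sums
      have hrhs : (∑ k ∈ Finset.range (n / 2 + 1),
          if d = n - 2 * k then eulerZigzag k * (n.choose (2 * k) : ℚ) else 0)
          = if d ≤ n ∧ Even (n - d) then
              eulerZigzag ((n - d) / 2) * (n.choose (2 * ((n - d) / 2)) : ℚ) else 0 :=
        collapse2 n d _
      rw [hrhs]
      have hinner : ∀ i j : ℕ, (∑ k ∈ Finset.range ((n - i - j) / 2 + 1),
          if d = n - i - j - 2 * k then
            eulerZigzag k * ((n - i - j).choose (2 * k) : ℚ) else 0)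
          = if d ≤ n - i - j ∧ Even (n - i - j - d) then
              eulerZigzag ((n - i - j - d) / 2) *
                ((n - i - j).choose (2 * ((n - i - j - d) / 2)) : ℚ) else 0 :=
        fun i j => collapse2 (n - i - j) d _
      have hS1 : (∑ i ∈ (Finset.range (n + 1)).filter (fun i => Even i),
          if d = n - i then (n.choose i : ℚ) else 0)
          = if Even (n - d) then (n.choose (n - d) : ℚ) else 0 := by
        rw [Finset.sum_filter]
        rw [Finset.sum_eq_single (n - d)]
        · rw [if_pos (by omega : d = n - (n - d))]
        · intro i hi hne
          rw [Finset.mem_range] at hi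
          rw [if_neg (by omega : ¬ d = n - i), ite_self]
        · intro hmem
          exact absurd (Finset.mem_range.mpr (by omega)) hmem
      rw [hS1]
      rcases Nat.even_or_odd (n - d) with hme | hmo
      · -- even case
        have he2 : 2 * ((n - d) / 2) = n - d := by
          obtain ⟨c, hc⟩ := hme; omega
        rw [if_pos (show d ≤ n ∧ Even (n - d) from ⟨hdn, hme⟩), if_pos hme, he2,
          eulerZigzag_eq, he2]
        have htri : (∑ i ∈ Finset.range (n + 1), ∑ j ∈ Finset.range (n + 1),
            if Odd i ∧ Odd j ∧ i + j ≤ n then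
              (n.choose i : ℚ) * ((n - i).choose j : ℚ) *
                (∑ k ∈ Finset.range ((n - i - j) / 2 + 1),
                  if d = n - i - j - 2 * k then
                    eulerZigzag k * ((n - i - j).choose (2 * k) : ℚ) else 0) else 0)
            = ∑ i ∈ Finset.range (n + 1), ∑ j ∈ Finset.range (n + 1),
              if Odd i ∧ Odd j ∧ i + j ≤ n - d then
                ((n.choose (n - d)) : ℚ) *
                  (((n - d).choose i : ℚ) * ((n - d - i).choose j : ℚ) * EZ (n - d - i - j))
              else 0 := by
          apply Finset.sum_congr rfl; intro i _
          apply Finset.sum_congr rfl; intro j _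
          by_cases hcond : Odd i ∧ Odd j ∧ i + j ≤ n
          · rw [if_pos hcond, hinner i j]
            by_cases hij : i + j ≤ n - d
            · rw [if_pos (show Odd i ∧ Odd j ∧ i + j ≤ n - d from ⟨hcond.1, hcond.2.1, hij⟩)]
              have hd1 : d ≤ n - i - j := by omega
              have heq : n - i - j - d = n - d - i - j := by omega
              have hpar : Even (n - i - j - d) := by
                obtain ⟨a, ha⟩ := hme; obtain ⟨b, hb⟩ := hcond.1
                obtain ⟨c, hc⟩ := hcond.2.1
                exact ⟨a - b - c - 1, by omega⟩
              rw [if_pos (show d ≤ n - i - j ∧ Even (n - i - j - d) from ⟨hd1, hpar⟩), heq]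
              have he3 : 2 * ((n - d - i - j) / 2) = n - d - i - j := by
                obtain ⟨a, ha⟩ := hpar; omega
              rw [he3, eulerZigzag_eq, he3]
              have hmn := multinom (n := n) (m := n - d) (i := i) (j := j) (by omega) hij
              linear_combination EZ (n - d - i - j) * hmn
            · rw [if_neg (fun hh : Odd i ∧ Odd j ∧ i + j ≤ n - d => hij hh.2.2),
                if_neg (fun hh : d ≤ n - i - j ∧ Even (n - i - j - d) =>
                  absurd hh.1 (by omega)), mul_zero]
          · rw [if_neg hcond,
              if_neg (fun hh : Odd i ∧ Odd j ∧ i + j ≤ n - d =>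
                hcond ⟨hh.1, hh.2.1, by omega⟩)]
        rw [htri]
        have hpull : (∑ i ∈ Finset.range (n + 1), ∑ j ∈ Finset.range (n + 1),
            if Odd i ∧ Odd j ∧ i + j ≤ n - d then
              ((n.choose (n - d)) : ℚ) *
                (((n - d).choose i : ℚ) * ((n - d - i).choose j : ℚ) * EZ (n - d - i - j))
            else 0)
            = ((n.choose (n - d)) : ℚ) * ((if Even (n - d) then 1 else 0) - EZ (n - d)) := by
          rw [← key_id (n - d) n (by omega), Finset.mul_sum]
          apply Finset.sum_congr rfl; intro i _
          rw [Finset.mul_sum]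
          apply Finset.sum_congr rfl; intro j _
          rw [mul_ite, mul_zero]
        rw [hpull, if_pos hme]
        ring
      · -- odd case
        rw [if_neg (fun hh : d ≤ n ∧ Even (n - d) =>
            (Nat.not_even_iff_odd.mpr hmo) hh.2),
          if_neg (Nat.not_even_iff_odd.mpr hmo)]
        rw [Finset.sum_eq_zero, sub_zero]
        intro i _
        apply Finset.sum_eq_zero
        intro j _
        by_cases hcond : Odd i ∧ Odd j ∧ i + j ≤ n
        · rw [if_pos hcond, hinner i j,
            if_neg (fun hh : d ≤ n - i - j ∧ Even (n - i - j - d) => by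
              obtain ⟨a, ha⟩ := hmo; obtain ⟨b, hb⟩ := hcond.1
              obtain ⟨c, hc⟩ := hcond.2.1; obtain ⟨e, he⟩ := hh.2
              have h1 := hh.1; have h2 := hcond.2.2
              omega), mul_zero]
        · rw [if_neg hcond]
    · -- d > n : everything vanishes
      rw [Finset.sum_eq_zero, Finset.sum_eq_zero, Finset.sum_eq_zero]
      · simp
      · intro k hk
        rw [Finset.mem_range] at hk
        exact if_neg (by omega)
      · intro i hi
        rw [Finset.mem_range] at hi
        apply Finset.sum_eq_zero
        intro j hj
        rw [Finset.mem_range] at hj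
        rcases Classical.em (Odd i ∧ Odd j ∧ i + j ≤ n) with h | h
        · rw [if_pos h, Finset.sum_eq_zero (fun k _ => if_neg (by omega)), mul_zero]
        · exact if_neg h
      · intro i hi
        rw [Finset.mem_filter, Finset.mem_range] at hi
        exact if_neg (by omega)
end

section
/- Let 𝔤 = 𝔨 ⊕ 𝔭 be the eigenspace decomposition of a finite-dimensional complex Lie algebra 𝔤 under an involution θ, and let s: S(𝔭) → U(𝔤) be symmetrization. Then for every homogeneous a ∈ 𝔨 and y ∈ S(𝔭), the element s(ad_a(y)) lies in the coideal I = 𝔨U(𝔤) + U(𝔤)𝔨. -/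
lemma key_telescope {R : Type*} [Ring R] (A : R) :
    ∀ (r : ℕ) (b : Fin r → R),
      (∑ i0 : Fin r,
        (List.ofFn fun i => if i = i0 then A * b i0 - b i0 * A else b i).prod)
        = A * (List.ofFn b).prod - (List.ofFn b).prod * A := by
  intro r
  induction r with
  | zero => intro b; simp
  | succ n ih =>
    intro b
    rw [Fin.sum_univ_succ]
    simp only [List.ofFn_succ, List.prod_cons]
    have h0 : (fun i : Fin n =>
        if (Fin.succ i) = (0 : Fin (n+1)) then A * b 0 - b 0 * A else b i.succ)
        = fun i : Fin n => b i.succ :=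
      funext fun i => by simp [Fin.succ_ne_zero]
    have h1 : ∀ j : Fin n,
        (fun i : Fin n =>
          if (Fin.succ i) = (Fin.succ j) then A * b j.succ - b j.succ * A else b i.succ)
        = fun i : Fin n =>
          if i = j then A * b j.succ - b j.succ * A else b i.succ :=
      fun j => funext fun i => by simp [Fin.succ_inj]
    have h2 : ∀ j : Fin n, ((0 : Fin (n+1)) = Fin.succ j) ↔ False :=
      fun j => by simp [(Fin.succ_ne_zero j).symm, eq_comm]
    simp only [if_pos rfl, h0, h1, h2, if_false, iff_false]
    rw [← Finset.mul_sum, ih (fun i => b i.succ)]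
    simp only [if_true]
    noncomm_ring

/-- For `a ∈ 𝔨` homogeneous (everything is even here, as `𝔤` is a
Lie algebra) and a monomial `y = x₁⋯x_r ∈ S(𝔭)`, the symmetrization
`s(ad_a(y)) = Σ_j s(x₁⋯[a,x_j]⋯x_r)` lies in the coideal `I = 𝔨U(𝔤) + U(𝔤)𝔨`.
Here `s` of a monomial is written out explicitly as the averaged sum over
permutations of ordered products in `U(𝔤)`. -/
theorem symmetrization_of_ad_mem_coideal
    {L : Type*} [LieRing L] [LieAlgebra ℂ L]
    (θ : L →ₗ⁅ℂ⁆ L) (hθ : ∀ x, θ (θ x) = x)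
    (𝔨 𝔭 : Submodule ℂ L)
    (h𝔨 : ∀ x, x ∈ 𝔨 ↔ θ x = x) (h𝔭 : ∀ x, x ∈ 𝔭 ↔ θ x = -x)
    (a : L) (ha : a ∈ 𝔨)
    (r : ℕ) (x : Fin r → L) (hx : ∀ i, x i ∈ 𝔭) :
    (∑ j : Fin r, ((r.factorial : ℂ))⁻¹ •
        ∑ π : Equiv.Perm (Fin r),
          (List.ofFn fun i =>
            UniversalEnvelopingAlgebra.ι ℂ
              (if π i = j then ⁅a, x j⁆ else x (π i))).prod)
      ∈ Submodule.span ℂ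
          {z : UniversalEnvelopingAlgebra ℂ L |
            ∃ k ∈ 𝔨, ∃ u, z = UniversalEnvelopingAlgebra.ι ℂ k * u} ⊔
        Submodule.span ℂ
          {z : UniversalEnvelopingAlgebra ℂ L |
            ∃ u, ∃ k ∈ 𝔨, z = u * UniversalEnvelopingAlgebra.ι ℂ k} := by
  set ι := UniversalEnvelopingAlgebra.ι ℂ (L := L) with hι
  have hπ : ∀ π : Equiv.Perm (Fin r),
      (∑ j : Fin r,
        (List.ofFn fun i => ι (if π i = j then ⁅a, x j⁆ else x (π i))).prod)
      = ι a * (List.ofFn fun i => ι (x (π i))).prod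
        - (List.ofFn fun i => ι (x (π i))).prod * ι a := by
    intro π
    rw [← Equiv.sum_comp π]
    have : ∀ i0 : Fin r,
        (fun i => ι (if π i = π i0 then ⁅a, x (π i0)⁆ else x (π i)))
        = fun i => if i = i0 then ι a * ι (x (π i0)) - ι (x (π i0)) * ι a
            else ι (x (π i)) := by
      intro i0
      funext i
      simp only [apply_ite ι, Equiv.apply_eq_iff_eq, LieHom.map_lie, Ring.lie_def]
    simp only [this]
    exact key_telescope (ι a) r (fun i => ι (x (π i)))
  have hswap : (∑ j : Fin r, ((r.factorial : ℂ))⁻¹ •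
        ∑ π : Equiv.Perm (Fin r),
          (List.ofFn fun i => ι (if π i = j then ⁅a, x j⁆ else x (π i))).prod)
      = ∑ π : Equiv.Perm (Fin r), ((r.factorial : ℂ))⁻¹ •
          ∑ j : Fin r,
            (List.ofFn fun i => ι (if π i = j then ⁅a, x j⁆ else x (π i))).prod := by
    simp only [Finset.smul_sum]
    exact Finset.sum_comm
  rw [hswap]
  refine Submodule.sum_mem _ fun π _ => Submodule.smul_mem _ _ ?_
  rw [hπ π]
  refine Submodule.sub_mem _ ?_ ?_
  · exact Submodule.mem_sup_left (Submodule.subset_span ⟨a, ha, _, rfl⟩)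
  · exact Submodule.mem_sup_right (Submodule.subset_span ⟨_, a, ha, rfl⟩)
end

section
/- With the hypotheses of the previous setting (𝔤 = 𝔨⊕𝔭 from an involution θ, θ-stable Cartan subalgebra 𝔥 = 𝔱⊕𝔞 with semisimple adjoint action, C_𝔤(𝔥)=𝔥 and C_𝔭(𝔞)=𝔞), one has S(𝔭) = S(𝔞) + ad_𝔨(S(𝔭)): every element of the symmetric algebra of 𝔭 is a sum of an element of S(𝔞) and an element in the image of the 𝔨-action on S(𝔭). -/
open MvPolynomial

/-- The linear embedding `𝔭 → S(𝔭)` sending a vector to the corresponding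
linear polynomial in the chosen basis. -/
noncomputable def linEmbed {L : Type*} [LieRing L] [LieAlgebra ℂ L]
    (𝔭 : Submodule ℂ L) (d : ℕ) (b : Module.Basis (Fin d) ℂ ↥𝔭) :
    ↥𝔭 →ₗ[ℂ] MvPolynomial (Fin d) ℂ :=
  (Finsupp.linearCombination ℂ (MvPolynomial.X : Fin d → MvPolynomial (Fin d) ℂ)).comp
    (b.repr.toLinearMap)

set_option maxHeartbeats 2000000 in
/-- Lepowsky: `S(𝔭) = S(𝔞) + ad_𝔨(S(𝔭))` for a symmetric
decomposition `𝔤 = 𝔨 ⊕ 𝔭` coming from an involution `θ`, with θ-stable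
Cartan subalgebra `𝔥 = 𝔱 ⊕ 𝔞` acting semisimply, `C_𝔤(𝔥) = 𝔥`, `C_𝔭(𝔞) = 𝔞`.
Here `S(𝔭)` is realized as polynomials on a basis of `𝔭`, the action of `a ∈ 𝔨`
is given by a family of derivations `D a` extending `ad_a`, and `S(𝔞)` is the
subalgebra generated by the linear polynomials coming from `𝔞 = 𝔥 ∩ 𝔭`. -/
theorem symmetric_algebra_decomposition
    {L : Type*} [LieRing L] [LieAlgebra ℂ L] [FiniteDimensional ℂ L]
    (θ : L →ₗ⁅ℂ⁆ L) (hθ : ∀ y, θ (θ y) = y)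
    (𝔨 𝔭 : Submodule ℂ L)
    (h𝔨 : ∀ y, y ∈ 𝔨 ↔ θ y = y) (h𝔭 : ∀ y, y ∈ 𝔭 ↔ θ y = -y)
    (𝔥 : LieSubalgebra ℂ L) (hθ𝔥 : ∀ y ∈ 𝔥, θ y ∈ 𝔥)
    (hdiag : ∃ (n : ℕ) (β : Module.Basis (Fin n) ℂ L),
      ∀ i, ∃ χ : L → ℂ, ∀ h ∈ 𝔥, ⁅h, β i⁆ = χ h • β i)
    (hCg : ∀ y : L, (∀ h ∈ 𝔥, ⁅y, h⁆ = 0) → y ∈ 𝔥)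
    (hCp : ∀ y ∈ 𝔭, (∀ a : L, a ∈ 𝔥 → a ∈ 𝔭 → ⁅y, a⁆ = 0) → y ∈ 𝔥)
    (d : ℕ) (b : Module.Basis (Fin d) ℂ ↥𝔭)
    (hcl : ∀ (a : ↥𝔨) (v : ↥𝔭), ⁅(a : L), (v : L)⁆ ∈ 𝔭)
    (D : ↥𝔨 → Derivation ℂ (MvPolynomial (Fin d) ℂ) (MvPolynomial (Fin d) ℂ))
    (hD : ∀ (a : ↥𝔨) (i : Fin d),
      D a (MvPolynomial.X i) = linEmbed 𝔭 d b ⟨⁅(a : L), (b i : L)⁆, hcl a (b i)⟩) :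
    ∀ q : MvPolynomial (Fin d) ℂ,
      q ∈ (Algebra.adjoin ℂ
            {z : MvPolynomial (Fin d) ℂ |
              ∃ v : ↥𝔭, (v : L) ∈ 𝔥 ∧ z = linEmbed 𝔭 d b v}).toSubmodule
          ⊔ Submodule.span ℂ
            {z : MvPolynomial (Fin d) ℂ |
              ∃ (a : ↥𝔨) (y : MvPolynomial (Fin d) ℂ), z = D a y} := by
  classical
  obtain ⟨n, β, hβ⟩ := hdiag
  choose χ hχ using hβ
  set ℓ : ↥𝔭 →ₗ[ℂ] MvPolynomial (Fin d) ℂ := linEmbed 𝔭 d b with hℓdef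
  set M : Submodule ℂ (MvPolynomial (Fin d) ℂ) :=
    (Algebra.adjoin ℂ
            {z : MvPolynomial (Fin d) ℂ |
              ∃ v : ↥𝔭, (v : L) ∈ 𝔥 ∧ z = ℓ v}).toSubmodule
          ⊔ Submodule.span ℂ
            {z : MvPolynomial (Fin d) ℂ |
              ∃ (a : ↥𝔨) (y : MvPolynomial (Fin d) ℂ), z = D a y} with hMdef
  show ∀ q : MvPolynomial (Fin d) ℂ, q ∈ M
  -- basic θ facts
  have hθp : ∀ v : ↥𝔭, θ (v : L) = -(v : L) := fun v => (h𝔭 _).mp v.2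
  have hθsub : ∀ x y : L, θ (x - y) = θ x - θ y := by
    intro x y; simpa using θ.toLinearMap.map_sub x y
  have hθadd : ∀ x y : L, θ (x + y) = θ x + θ y := by
    intro x y; simpa using θ.toLinearMap.map_add x y
  have hθsmul : ∀ (c : ℂ) (x : L), θ (c • x) = c • θ x := by
    intro c x; simpa using θ.toLinearMap.map_smul c x
  have hℓb : ∀ i, ℓ (b i) = X i := by intro i; simp [hℓdef, linEmbed]
  -- the 𝔭- and 𝔨- components of the weight basis
  have hyPm : ∀ i, (2:ℂ)⁻¹ • (β i - θ (β i)) ∈ 𝔭 := by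
    intro i
    rw [h𝔭, hθsmul, hθsub, hθ, ← neg_sub, smul_neg]
  have hyKm : ∀ i, (2:ℂ)⁻¹ • (β i + θ (β i)) ∈ 𝔨 := by
    intro i
    rw [h𝔨, hθsmul, hθadd, hθ, add_comm]
  set yP : Fin n → L := fun i => (2:ℂ)⁻¹ • (β i - θ (β i)) with hyPdef
  set yK : Fin n → L := fun i => (2:ℂ)⁻¹ • (β i + θ (β i)) with hyKdef
  set Y : Fin n → ↥𝔭 := fun i => ⟨yP i, hyPm i⟩ with hYdef
  -- linearity of the characters
  have hχl : ∀ i (c₁ c₂ : ℂ) (h₁ h₂ : L), h₁ ∈ 𝔥 → h₂ ∈ 𝔥 →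
      χ i (c₁ • h₁ + c₂ • h₂) = c₁ * χ i h₁ + c₂ * χ i h₂ := by
    intro i c₁ c₂ h₁ h₂ m₁ m₂
    have hmem : c₁ • h₁ + c₂ • h₂ ∈ 𝔥 := 𝔥.add_mem (𝔥.smul_mem _ m₁) (𝔥.smul_mem _ m₂)
    have e1 := hχ i _ hmem
    rw [add_lie, smul_lie, smul_lie, hχ i h₁ m₁, hχ i h₂ m₂] at e1
    apply smul_left_injective ℂ (β.ne_zero i)
    show χ i (c₁ • h₁ + c₂ • h₂) • β i = (c₁ * χ i h₁ + c₂ * χ i h₂) • β i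
    rw [← e1, smul_smul, smul_smul, add_smul]
  -- brackets with θ(β i)
  have hbθ : ∀ i (a : L), a ∈ 𝔥 → a ∈ 𝔭 → ⁅a, θ (β i)⁆ = -(χ i a • θ (β i)) := by
    intro i a ha hap
    have h1 : θ ⁅a, β i⁆ = θ (χ i a • β i) := congrArg θ (hχ i a ha)
    rw [LieHom.map_lie, hθsmul, (h𝔭 a).mp hap, neg_lie] at h1
    exact neg_eq_iff_eq_neg.mp h1
  -- bracket relations
  have hbrA : ∀ i (a : ↥𝔭), (a : L) ∈ 𝔥 → ⁅(a : L), yK i⁆ = χ i (a : L) • yP i := by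
    intro i a ha
    rw [hyKdef, hyPdef]
    show ⁅(a:L), (2:ℂ)⁻¹ • (β i + θ (β i))⁆ = χ i (a:L) • (2:ℂ)⁻¹ • (β i - θ (β i))
    rw [lie_smul, lie_add, hχ i _ ha, hbθ i _ ha a.2, ← sub_eq_add_neg, ← smul_sub, smul_comm]
  have hbrB : ∀ i (a : ↥𝔭), (a : L) ∈ 𝔥 → ⁅(a : L), yP i⁆ = χ i (a : L) • yK i := by
    intro i a ha
    rw [hyKdef, hyPdef]
    show ⁅(a:L), (2:ℂ)⁻¹ • (β i - θ (β i))⁆ = χ i (a:L) • (2:ℂ)⁻¹ • (β i + θ (β i))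
    rw [lie_smul, lie_sub, hχ i _ ha, hbθ i _ ha a.2, sub_neg_eq_add, ← smul_add, smul_comm]
  have hbK : ∀ i (a : ↥𝔭), (a : L) ∈ 𝔥 → ⁅yK i, (a : L)⁆ = (-χ i (a : L)) • yP i := by
    intro i a ha
    rw [← lie_skew, hbrA i a ha, neg_smul]
  -- D computes the adjoint action on linear polynomials
  have adm : ∀ k : ↥𝔨, ∃ f : ↥𝔭 →ₗ[ℂ] ↥𝔭, ∀ v, f v = ⟨⁅(k : L), (v : L)⁆, hcl k v⟩ := by
    intro k
    refine ⟨{ toFun := fun v => ⟨⁅(k : L), (v : L)⁆, hcl k v⟩,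
              map_add' := ?_, map_smul' := ?_ }, fun v => rfl⟩
    · intro x y; apply Subtype.ext; simp
    · intro c x; apply Subtype.ext; simp
  have hF2 : ∀ (k : ↥𝔨) (v : ↥𝔭), D k (ℓ v) = ℓ ⟨⁅(k : L), (v : L)⁆, hcl k v⟩ := by
    intro k v
    obtain ⟨f, hf⟩ := adm k
    have hlin : ((D k).toLinearMap.comp ℓ) = ℓ.comp f := by
      apply Module.Basis.ext b
      intro i
      simp only [LinearMap.coe_comp, Function.comp_apply, Derivation.coeFn_coe]
      rw [hℓb, hD, hf]
    have h2 := DFunLike.congr_fun hlin v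
    simp only [LinearMap.coe_comp, Function.comp_apply, Derivation.coeFn_coe] at h2
    rw [h2, hf]
  -- membership helpers
  have hMA : ∀ lA : List ↥𝔭, (∀ x ∈ lA, (x : L) ∈ 𝔥) → (lA.map ℓ).prod ∈ M := by
    intro lA hA
    apply Submodule.mem_sup_left
    rw [Subalgebra.mem_toSubmodule]
    apply Subalgebra.list_prod_mem
    intro z hz
    rw [List.mem_map] at hz
    obtain ⟨x, hx, rfl⟩ := hz
    exact Algebra.subset_adjoin ⟨x, hA x hx, rfl⟩
  have hMD : ∀ (k : ↥𝔨) (y : MvPolynomial (Fin d) ℂ), D k y ∈ M := fun k y =>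
    Submodule.mem_sup_right (Submodule.subset_span ⟨k, y, rfl⟩)
  -- the main induction
  have hP : ∀ s : ℕ, ∀ lA : List ↥𝔭, (∀ x ∈ lA, (x : L) ∈ 𝔥) →
      ∀ lQ : List ↥𝔭, lQ.length ≤ s →
      (lA.map ℓ).prod * (lQ.map ℓ).prod ∈ M := by
    intro s
    induction s with
    | zero =>
      intro lA hA lQ hlen
      rw [Nat.le_zero, List.length_eq_zero_iff] at hlen
      subst hlen
      simpa using hMA lA hA
    | succ s ih =>
      have Haux : ∀ (k : ↥𝔨) (u lpre lA : List ↥𝔭), (∀ x ∈ lA, (x : L) ∈ 𝔥) →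
          lpre.length + u.length ≤ s →
          (lA.map ℓ).prod * ((lpre.map ℓ).prod * D k ((u.map ℓ).prod)) ∈ M := by
        intro k u
        induction u with
        | nil =>
          intro lpre lA hA _
          simp only [List.map_nil, List.prod_nil, Derivation.map_one_eq_zero, mul_zero]
          exact M.zero_mem
        | cons x u' ihu =>
          intro lpre lA hA hlen
          rw [List.map_cons, List.prod_cons, Derivation.leibniz, smul_eq_mul, smul_eq_mul, hF2]
          have t1 : (lA.map ℓ).prod * (((lpre ++ [x]).map ℓ).prod * D k ((u'.map ℓ).prod)) ∈ M := by
            apply ihu (lpre ++ [x]) lA hA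
            simp only [List.length_append, List.length_cons, List.length_nil] at hlen ⊢
            omega
          have t2 : (lA.map ℓ).prod *
              (((lpre ++ (⟨⁅(k : L), (x : L)⁆, hcl k x⟩ :: u')).map ℓ).prod) ∈ M := by
            apply ih lA hA
            simp only [List.length_append, List.length_cons] at hlen ⊢
            omega
          rw [List.map_append, List.prod_append, List.map_cons, List.prod_cons] at t2
          rw [List.map_append, List.prod_append] at t1
          simp only [List.map_cons, List.map_nil, List.prod_cons, List.prod_nil, mul_one] at t1
          have hEq : (lA.map ℓ).prod * ((lpre.map ℓ).prod *
                (ℓ x * D k ((u'.map ℓ).prod) + (u'.map ℓ).prod * ℓ ⟨⁅(k : L), (x : L)⁆, hcl k x⟩))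
              = (lA.map ℓ).prod * ((lpre.map ℓ).prod * ℓ x * D k ((u'.map ℓ).prod))
                + (lA.map ℓ).prod * ((lpre.map ℓ).prod *
                    (ℓ ⟨⁅(k : L), (x : L)⁆, hcl k x⟩ * (u'.map ℓ).prod)) := by ring
          rw [hEq]
          exact M.add_mem t1 t2
      -- the core case: head factor is a weight vector with nonzero restricted weight
      have core : ∀ (j : Fin n), (∃ a : ↥𝔭, (a : L) ∈ 𝔥 ∧ χ j (a : L) ≠ 0) →
          ∀ u₀ : List ↥𝔭, u₀.length ≤ s →
          ∀ lA : List ↥𝔭, (∀ x ∈ lA, (x : L) ∈ 𝔥) →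
          (lA.map ℓ).prod * (ℓ (Y j) * (u₀.map ℓ).prod) ∈ M := by
        intro j hg u₀ hu₀
        obtain ⟨a, ha, hane⟩ := hg
        set a₀ : ↥𝔭 := (-(χ j (a : L))⁻¹) • a with ha₀def
        have ha₀ : (a₀ : L) ∈ 𝔥 := by
          rw [ha₀def]
          exact 𝔥.smul_mem _ ha
        have hχa₀ : χ j (a₀ : L) = -1 := by
          have h1 : (a₀ : L) = (-(χ j (a : L))⁻¹) • (a : L) + (0:ℂ) • (a : L) := by
            simp [ha₀def]
          rw [h1, hχl j _ _ _ _ ha ha]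
          field_simp
          ring
        set k : ↥𝔨 := ⟨yK j, hyKm j⟩ with hkdef
        have hDk : ∀ x : ↥𝔭, (x : L) ∈ 𝔥 → D k (ℓ x) = (-χ j (x : L)) • ℓ (Y j) := by
          intro x hx
          rw [hF2 k x]
          have h1 : (⟨⁅(k : L), (x : L)⁆, hcl k x⟩ : ↥𝔭) = (-χ j (x : L)) • Y j := by
            apply Subtype.ext
            show ⁅(k : L), (x : L)⁆ = (-χ j (x : L)) • yP j
            exact hbK j x hx
          rw [h1, map_smul]
        have hDa₀ : D k (ℓ a₀) = ℓ (Y j) := by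
          rw [hDk a₀ ha₀, hχa₀]
          simp
        have hDzero : ∀ l₁ : List ↥𝔭, (∀ x ∈ l₁, (x : L) ∈ 𝔥 ∧ χ j (x : L) = 0) →
            D k ((l₁.map ℓ).prod) = 0 := by
          intro l₁ h₁
          induction l₁ with
          | nil => simp
          | cons x l' ihl =>
            rw [List.map_cons, List.prod_cons, Derivation.leibniz,
              ihl (fun y hy => h₁ y (List.mem_cons_of_mem _ hy)),
              hDk x (h₁ x (List.mem_cons_self)).1, (h₁ x (List.mem_cons_self)).2]
            simp
        have c3 : ∀ l₂ : List ↥𝔭, (∀ x ∈ l₂, (x : L) ∈ 𝔥) →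
            ∀ (c : ℕ) (l₁ : List ↥𝔭), (∀ x ∈ l₁, (x : L) ∈ 𝔥 ∧ χ j (x : L) = 0) →
            (ℓ a₀)^c * ((l₁.map ℓ).prod * ((l₂.map ℓ).prod * (ℓ (Y j) * (u₀.map ℓ).prod))) ∈ M := by
          intro l₂
          induction l₂ with
          | nil =>
            intro _ c l₁ h₁
            simp only [List.map_nil, List.prod_nil, one_mul]
            set A0 := ℓ a₀ with hA0
            set PA := (l₁.map ℓ).prod with hPA
            set PQ := (u₀.map ℓ).prod with hPQ
            set Qp := ℓ (Y j) with hQp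
            have e1 : D k (A0 * (A0^c * (PA * PQ)))
                = Qp * (A0^c * (PA * PQ)) + A0 * D k (A0^c * (PA * PQ)) := by
              rw [Derivation.leibniz, hDa₀, smul_eq_mul, smul_eq_mul]
              ring
            have e2 : D k (A0^c * (PA * PQ))
                = c • (A0^(c-1) * Qp) * (PA * PQ) + A0^c * (PA * D k PQ) := by
              rw [Derivation.leibniz, Derivation.leibniz, hDzero l₁ h₁,
                Derivation.leibniz_pow, hDa₀]
              simp only [smul_eq_mul, mul_zero, add_zero, smul_mul_assoc]
              ring
            have hkey : ((c:ℂ)+1) • (A0^c * (PA * (Qp * PQ)))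
                = D k (A0 * (A0^c * (PA * PQ))) - A0 * (A0^c * (PA * D k PQ)) := by
              rw [e1, e2]
              rw [← Nat.cast_smul_eq_nsmul ℂ c]
              rw [smul_eq_C_mul, smul_eq_C_mul]
              cases c with
              | zero => simp; ring
              | succ m =>
                simp only [Nat.cast_add, Nat.cast_one, Nat.add_sub_cancel]
                push_cast
                simp only [C_add, C_1]
                ring
            have hmem : ((c:ℂ)+1) • (A0^c * (PA * (Qp * PQ))) ∈ M := by
              rw [hkey]
              apply M.sub_mem (hMD k _)
              have h3 := Haux k u₀ [] (List.replicate (c+1) a₀ ++ l₁) ?_ (by simpa using hu₀)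
              · rw [List.map_append, List.prod_append, List.map_replicate, List.prod_replicate] at h3
                simp only [List.map_nil, List.prod_nil, one_mul] at h3
                convert h3 using 1
                rw [← hPA, ← hPQ, ← hA0]
                ring
              · intro x hx
                rcases List.mem_append.mp hx with h | h
                · rw [List.eq_of_mem_replicate h]; exact ha₀
                · exact (h₁ x h).1
            have := M.smul_mem ((c:ℂ)+1)⁻¹ hmem
            rwa [smul_smul, inv_mul_cancel₀ (Nat.cast_add_one_ne_zero c),
              one_smul] at this
          | cons x l₂' ihl =>
            intro h₂ c l₁ h₁
            have hx𝔥 : (x : L) ∈ 𝔥 := h₂ x (List.mem_cons_self)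
            set x' : ↥𝔭 := x + (χ j (x : L)) • a₀ with hx'def
            have hx'𝔥 : (x' : L) ∈ 𝔥 := by
              rw [hx'def]
              push_cast
              exact 𝔥.add_mem hx𝔥 (𝔥.smul_mem _ ha₀)
            have hχx' : χ j (x' : L) = 0 := by
              have h1 : (x' : L) = (1:ℂ) • (x : L) + (χ j (x : L)) • (a₀ : L) := by
                simp [hx'def]
              rw [h1, hχl j _ _ _ _ hx𝔥 ha₀, hχa₀]
              ring
            have hℓx : ℓ x = ℓ x' - (χ j (x : L)) • ℓ a₀ := by
              rw [hx'def, map_add, map_smul, add_sub_cancel_right]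
            have m1 := ihl (fun y hy => h₂ y (List.mem_cons_of_mem _ hy)) c (x' :: l₁)
              (fun y hy => by
                rcases List.mem_cons.mp hy with h | h
                · subst h; exact ⟨hx'𝔥, hχx'⟩
                · exact h₁ y h)
            have m2 := ihl (fun y hy => h₂ y (List.mem_cons_of_mem _ hy)) (c+1) l₁ h₁
            rw [List.map_cons, List.prod_cons] at m1 ⊢
            have hEq : (ℓ a₀)^c * ((l₁.map ℓ).prod * ((ℓ x * (l₂'.map ℓ).prod) * (ℓ (Y j) * (u₀.map ℓ).prod)))
                = (ℓ a₀)^c * ((ℓ x' * (l₁.map ℓ).prod) * ((l₂'.map ℓ).prod * (ℓ (Y j) * (u₀.map ℓ).prod)))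
                  - (χ j (x : L)) • ((ℓ a₀)^(c+1) * ((l₁.map ℓ).prod * ((l₂'.map ℓ).prod * (ℓ (Y j) * (u₀.map ℓ).prod)))) := by
              rw [hℓx, smul_eq_C_mul, smul_eq_C_mul]
              ring
            rw [hEq]
            exact M.sub_mem m1 (M.smul_mem _ m2)
        intro lA hA
        have := c3 lA hA 0 [] (by simp)
        simpa using this
      -- main body of succ case
      intro lA hA lQ hlen
      rcases lQ with _ | ⟨qh, u₀⟩
      · simpa using hMA lA hA
      · have hu₀ : u₀.length ≤ s := by simpa using hlen
        -- expand qh over the weight basis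
        obtain ⟨cq, h0⟩ : ∃ cq : Fin n → ℂ, ∑ i : Fin n, cq i • β i = (qh : L) :=
          ⟨fun i => β.repr (qh : L) i, β.sum_repr _⟩
        have hθq : θ (qh : L) = ∑ i : Fin n, cq i • θ (β i) := by
          have hms := map_sum θ.toLinearMap (fun i : Fin n => cq i • β i) Finset.univ
          simp only [LieHom.coe_toLinearMap] at hms
          conv_lhs => rw [← h0]
          rw [hms]
          exact Finset.sum_congr rfl fun i _ => by rw [hθsmul]
        have hqL : (qh : L) = ∑ i : Fin n, cq i • yP i := by
          have key : (qh : L) = (2:ℂ)⁻¹ • ((qh : L) - θ (qh : L)) := by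
            rw [hθp qh, sub_neg_eq_add, ← two_smul ℂ, smul_smul,
              inv_mul_cancel₀ two_ne_zero, one_smul]
          rw [key, hθq]
          conv_lhs => rw [← h0]
          rw [← Finset.sum_sub_distrib, Finset.smul_sum]
          exact Finset.sum_congr rfl fun i _ => by rw [← smul_sub, smul_comm]
        have hqrep : ℓ qh = ∑ i : Fin n, cq i • ℓ (Y i) := by
          have hqsub : qh = ∑ i : Fin n, cq i • Y i := by
            apply Subtype.ext
            rw [hqL]
            simp
            rfl
          rw [hqsub, map_sum]
          exact Finset.sum_congr rfl fun i _ => by rw [map_smul]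
        rw [List.map_cons, List.prod_cons, hqrep, Finset.sum_mul, Finset.mul_sum]
        apply Submodule.sum_mem
        intro i _
        rw [smul_mul_assoc, mul_smul_comm]
        apply Submodule.smul_mem
        by_cases hg : ∃ a : ↥𝔭, (a : L) ∈ 𝔥 ∧ χ i (a : L) ≠ 0
        · exact core i hg u₀ hu₀ lA hA
        · push_neg at hg
          have hyPh : yP i ∈ 𝔥 := by
            apply hCp (yP i) (hyPm i)
            intro w hw hwp
            have h1 : ⁅w, yP i⁆ = χ i w • yK i := hbrB i ⟨w, hwp⟩ hw
            have h2 : χ i w = 0 := hg ⟨w, hwp⟩ hw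
            rw [← lie_skew, h1, h2, zero_smul, neg_zero]
          have hm := ih ((Y i) :: lA) (by
            intro x hx
            rcases List.mem_cons.mp hx with h | h
            · subst h; exact hyPh
            · exact hA x h) u₀ hu₀
          rw [List.map_cons, List.prod_cons] at hm
          have hEq : (lA.map ℓ).prod * (ℓ (Y i) * (u₀.map ℓ).prod)
              = ℓ (Y i) * (lA.map ℓ).prod * (u₀.map ℓ).prod := by ring
          rw [hEq]
          exact hm
  -- conclude
  intro q
  have hXl : ∀ l : List (Fin d), ((l.map X).prod : MvPolynomial (Fin d) ℂ) ∈ M := by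
    intro l
    have h1 := hP l.length [] (by simp) (l.map b) (by simp)
    simp only [List.map_nil, List.prod_nil, one_mul, List.map_map] at h1
    have h2 : l.map (ℓ ∘ b) = l.map X := by
      apply List.map_congr_left
      intro x _
      exact hℓb x
    rwa [h2] at h1
  have hlist : ∀ v : Fin d →₀ ℕ, ∃ l : List (Fin d),
      ((l.map X).prod : MvPolynomial (Fin d) ℂ) = monomial v 1 := by
    intro v
    induction v using Finsupp.induction with
    | zero => exact ⟨[], by simp⟩
    | single_add a nn f _ _ ihf =>
      obtain ⟨l, hl⟩ := ihf
      refine ⟨List.replicate nn a ++ l, ?_⟩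
      rw [List.map_append, List.prod_append, hl, List.map_replicate, List.prod_replicate,
        X_pow_eq_monomial, monomial_mul, one_mul]
  have hs : (∑ v ∈ q.support, monomial v (coeff v q)) ∈ M := by
    apply Submodule.sum_mem
    intro v _
    obtain ⟨l, hl⟩ := hlist v
    have h1 : (monomial v (coeff v q) : MvPolynomial (Fin d) ℂ)
        = (coeff v q) • (monomial v 1) := by
      rw [smul_monomial, smul_eq_mul, mul_one]
    rw [h1, ← hl]
    exact Submodule.smul_mem _ _ (hXl l)
  rwa [← as_sum] at hs
end
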